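/- For m ≥ 1 and k ∈ {1,…,m}, it holds that ∑_{l=1}^m l·sin(kπl/(m+1)) = (−1)^{k+1}·((m+1)/2)·cos(kπ/(2(m+1)))/sin(kπ/(2(m+1))). -/

import Mathlib

/-!
By induction on `n`, using the recurrence `sin ((l + 1) θ) + sin ((l - 1) θ) = 2 cos θ sin (l θ)`
gives `2 (1 - cos θ) ∑_{l=1}^n l sin (l θ) = (n + 1) sin (n θ) - n sin ((n + 1) θ)`.
At `θ = k π / (m + 1)` and `n = m` the second term vanishes and `sin (m θ) = (-1)^(k+1) sin θ`;
writing `θ = 2x` with `1 - cos θ = 2 sin² x` and `sin θ = 2 sin x cos x` leaves `cot x`.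
-/

open Real Finset

theorem two_mul_one_sub_cos_mul_sum_Icc_mul_sin (θ : ℝ) (n : ℕ) :
    2 * (1 - cos θ) * ∑ l ∈ Icc 1 n, (l : ℝ) * sin (l * θ) =
      (n + 1) * sin (n * θ) - n * sin ((n + 1) * θ) := by
  induction n with
  | zero => simp
  | succ n ih =>
    have hrec : sin ((n + 1 + 1) * θ) + sin (n * θ) = 2 * cos θ * sin ((n + 1) * θ) := by
      rw [show ((n : ℝ) + 1 + 1) * θ = (n + 1) * θ + θ by ring,
        show (n : ℝ) * θ = (n + 1) * θ - θ by ring, sin_add, sin_sub]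
      ring
    rw [sum_Icc_succ_top (by omega), mul_add, ih]
    push_cast
    linear_combination ((n : ℝ) + 1) * hrec

theorem stmt_4_general (m k : ℕ) (hk1 : 1 ≤ k) (hk2 : k ≤ m) :
    ∑ l ∈ Finset.Icc 1 m, (l : ℝ) * Real.sin ((k : ℝ) * π * l / ((m : ℝ) + 1)) =
      (-1 : ℝ) ^ (k + 1) * (((m : ℝ) + 1) / 2) *
        Real.cos ((k : ℝ) * π / (2 * ((m : ℝ) + 1))) /
          Real.sin ((k : ℝ) * π / (2 * ((m : ℝ) + 1))) := by
  set x : ℝ := k * π / (2 * (m + 1)) with hx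
  have hk : (1 : ℝ) ≤ k := by exact_mod_cast hk1
  have hkm : (k : ℝ) ≤ m := by exact_mod_cast hk2
  have hsin : sin x ≠ 0 := by
    refine (sin_pos_of_pos_of_lt_pi (by positivity) ?_).ne'
    rw [hx, div_lt_iff₀ (by positivity)]
    nlinarith [pi_pos]
  have hsummand (l : ℝ) : k * π * l / (m + 1) = l * (2 * x) := by
    rw [hx]; field_simp
  have hfull : ((m : ℝ) + 1) * (2 * x) = k * π := by
    rw [hx]; field_simp
  have hlast : (m : ℝ) * (2 * x) = k * π - 2 * x := by
    linear_combination hfull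
  have key := two_mul_one_sub_cos_mul_sum_Icc_mul_sin (2 * x) m
  rw [hfull, hlast, sin_nat_mul_pi, sin_nat_mul_pi_sub, cos_two_mul, sin_two_mul,
    cos_sq'] at key
  simp_rw [hsummand]
  generalize ∑ l ∈ Icc 1 m, (l : ℝ) * sin (l * (2 * x)) = S at key ⊢
  field_simp
  apply mul_left_cancel₀ hsin
  linear_combination key / 2

theorem stmt_4 (m k : ℕ) (hm : 1 ≤ m) (hk1 : 1 ≤ k) (hk2 : k ≤ m) :
    ∑ l ∈ Finset.Icc 1 m, (l : ℝ) * Real.sin ((k : ℝ) * π * l / ((m : ℝ) + 1)) =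
      (-1 : ℝ) ^ (k + 1) * (((m : ℝ) + 1) / 2) *
        Real.cos ((k : ℝ) * π / (2 * ((m : ℝ) + 1))) /
          Real.sin ((k : ℝ) * π / (2 * ((m : ℝ) + 1))) :=
  stmt_4_general m k hk1 hk2
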